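/- If w is a width-two vector for P (i.e., h_min = −1 and h_max = 1), then a combinatorial mutation Q := mut_w(P,F) is a canonical polytope if and only if P is a canonical polytope. -/

import Mathlib

open Set Pointwise

noncomputable section

def pairing {n : ℕ} (w : Fin n → ℤ) (x : Fin n → ℚ) : ℚ :=
  ∑ i, (w i : ℚ) * x i

def IsLatticePt {n : ℕ} (x : Fin n → ℚ) : Prop := ∀ i, ∃ z : ℤ, x i = (z : ℚ)

def IsLatticePolytope {n : ℕ} (P : Set (Fin n → ℚ)) : Prop :=
  ∃ S : Finset (Fin n → ℚ), (∀ x ∈ S, IsLatticePt x) ∧ P = convexHull ℚ (S : Set (Fin n → ℚ))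

def IsPrimitive {n : ℕ} (w : Fin n → ℤ) : Prop := Finset.univ.gcd w = 1

def wSlice {n : ℕ} (w : Fin n → ℤ) (h : ℤ) (P : Set (Fin n → ℚ)) : Set (Fin n → ℚ) :=
  convexHull ℚ {x | x ∈ P ∧ IsLatticePt x ∧ pairing w x = (h : ℚ)}

def mutation {n : ℕ} (w : Fin n → ℤ) (P F : Set (Fin n → ℚ)) (G : ℤ → Set (Fin n → ℚ)) :
    Set (Fin n → ℚ) :=
  convexHull ℚ ((⋃ h : ℤ, ⋃ _ : h < 0, G h) ∪
    ⋃ h : ℤ, ⋃ _ : 0 ≤ h, (wSlice w h P + (h : ℚ) • F))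

def IsMutData {n : ℕ} (w : Fin n → ℤ) (P F : Set (Fin n → ℚ))
    (G : ℤ → Set (Fin n → ℚ)) : Prop :=
  IsLatticePolytope F ∧ F.Nonempty ∧ (∀ x ∈ F, pairing w x = 0) ∧
  ∀ h : ℤ, h < 0 →
    (G h = ∅ ∨ IsLatticePolytope (G h)) ∧
    {v | v ∈ P.extremePoints ℚ ∧ pairing w v = (h : ℚ)} ⊆ G h + (-(h : ℚ)) • F ∧
    G h + (-(h : ℚ)) • F ⊆ wSlice w h P

def dpair {n : ℕ} (u v : Fin n → ℚ) : ℚ := ∑ i, u i * v i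

def dualP {n : ℕ} (P : Set (Fin n → ℚ)) : Set (Fin n → ℚ) := {u | ∀ v ∈ P, -1 ≤ dpair u v}

def IsPrimitivePt {n : ℕ} (x : Fin n → ℚ) : Prop :=
  ∃ z : Fin n → ℤ, (∀ i, x i = (z i : ℚ)) ∧ Finset.univ.gcd z = 1

def IsFano {n : ℕ} (P : Set (Fin n → ℚ)) : Prop :=
  IsLatticePolytope P ∧ (0 : Fin n → ℚ) ∈ interior P ∧
    ∀ v ∈ P.extremePoints ℚ, IsPrimitivePt v

def IsCanonical {n : ℕ} (P : Set (Fin n → ℚ)) : Prop :=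
  IsFano P ∧ ∀ x ∈ interior P, IsLatticePt x → x = 0


/-! At width two every lattice point of `P` has height `-1`, `0` or `1`. Writing `X = G (-1)` and
`Pₕ` for the hull of the lattice points of `P` at height `h`, the vertices of `P` at height `-1` lie
in `X + F`, so `P = conv ((X + F) ∪ P₀ ∪ P₁)` while `Q = conv (X ∪ P₀ ∪ (P₁ + F))`. Moving `F` from
the bottom to the top layer does not change interior points at height `0`: a point `p` of `P` at
height `t ≥ 0` is sheared to `p + t • f ∈ Q` by pairing its bottom mass with an equal top mass,
points slightly below height `0` lie on segments from `X`, and reflecting the heights gives the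
converse. Interior lattice points of either polytope have height `0`, so `P` and `Q` share them
and the origin, and a lattice vertex of a polytope with no nonzero interior lattice point is
primitive. -/

open Filter Topology

section ConvexGeometry

variable {𝕜 E : Type*} [Field 𝕜] [LinearOrder 𝕜] [IsStrictOrderedRing 𝕜]
  [AddCommGroup E] [Module 𝕜 E]

lemma exists_smul_add_smul_of_mem_convexHull_union {s t : Set E} (hs : Convex 𝕜 s)
    (ht : Convex 𝕜 t) {x : E} (hx : x ∈ convexHull 𝕜 (s ∪ t)) :
    ∃ a b : 𝕜, ∃ y z : E, 0 ≤ a ∧ 0 ≤ b ∧ a + b = 1 ∧ (a ≠ 0 → y ∈ s) ∧ (b ≠ 0 → z ∈ t) ∧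
      x = a • y + b • z := by
  rcases s.eq_empty_or_nonempty with rfl | hs'
  · rw [empty_union, ht.convexHull_eq] at hx
    exact ⟨0, 1, x, x, le_rfl, zero_le_one, zero_add 1, (absurd rfl ·), fun _ ↦ hx, by simp⟩
  rcases t.eq_empty_or_nonempty with rfl | ht'
  · rw [union_empty, hs.convexHull_eq] at hx
    exact ⟨1, 0, x, x, zero_le_one, le_rfl, add_zero 1, fun _ ↦ hx, (absurd rfl ·), by simp⟩
  rw [convexHull_union hs' ht', hs.convexHull_eq, ht.convexHull_eq, mem_convexJoin] at hx
  obtain ⟨y, hy, z, hz, a, b, ha, hb, hab, rfl⟩ := hx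
  exact ⟨a, b, y, z, ha, hb, hab, fun _ ↦ hy, fun _ ↦ hz, rfl⟩

lemma exists_smul_add_smul_add_smul_of_mem_convexHull_union {A B C : Set E}
    (hA : Convex 𝕜 A) (hB : Convex 𝕜 B) (hC : Convex 𝕜 C) {x : E}
    (hx : x ∈ convexHull 𝕜 (A ∪ B ∪ C)) :
    ∃ a b c : 𝕜, ∃ u v z : E, 0 ≤ a ∧ 0 ≤ b ∧ 0 ≤ c ∧ a + b + c = 1 ∧
      (a ≠ 0 → u ∈ A) ∧ (b ≠ 0 → v ∈ B) ∧ (c ≠ 0 → z ∈ C) ∧ x = a • u + b • v + c • z := by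
  rw [← convexHull_convexHull_union_left] at hx
  obtain ⟨d, c, y, z, hd, hc, hdc, hy, hz, rfl⟩ :=
    exists_smul_add_smul_of_mem_convexHull_union (convex_convexHull 𝕜 _) hC hx
  rcases eq_or_ne d 0 with rfl | hd0
  · exact ⟨0, 0, c, y, y, z, le_rfl, le_rfl, hc, by simpa using hdc, (absurd rfl ·),
      (absurd rfl ·), hz, by simp⟩
  obtain ⟨a, b, u, v, ha, hb, hab, hu, hv, rfl⟩ :=
    exists_smul_add_smul_of_mem_convexHull_union hA hB (hy hd0)
  refine ⟨d * a, d * b, c, u, v, z, mul_nonneg hd ha, mul_nonneg hd hb, hc,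
    by linear_combination d * hab + hdc, fun h ↦ hu (right_ne_zero_of_mul h),
    fun h ↦ hv (right_ne_zero_of_mul h), hz, by simp only [smul_add, smul_smul]⟩

lemma mem_extremePoints_convexHull_insert {x : E} {t : Set E} (hx : x ∉ convexHull 𝕜 t) :
    x ∈ (convexHull 𝕜 (insert x t)).extremePoints 𝕜 := by
  rcases t.eq_empty_or_nonempty with rfl | ht
  · simp
  rw [mem_extremePoints_iff_left]
  refine ⟨subset_convexHull 𝕜 _ (mem_insert x t), fun y₁ hy₁ y₂ hy₂ hseg ↦ ?_⟩
  rw [convexHull_insert ht, convexJoin_singleton_left, mem_iUnion₂] at hy₁ hy₂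
  obtain ⟨z₁, hz₁, a₁, b₁, ha₁, hb₁, hab₁, rfl⟩ := hy₁
  obtain ⟨z₂, hz₂, a₂, b₂, ha₂, hb₂, hab₂, rfl⟩ := hy₂
  obtain ⟨u, v, hu, hv, huv, hxuv⟩ := hseg
  -- `x` is a combination of itself and of `z₁, z₂ ∈ convexHull t`; the latter get total weight
  -- `u * b₁ + v * b₂`, which must vanish since `x ∉ convexHull t`.
  have hcombo : (u * b₁ + v * b₂) • x = (u * b₁) • z₁ + (v * b₂) • z₂ := by
    have hab : u * b₁ + v * b₂ = 1 - (u * a₁ + v * a₂) := by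
      linear_combination u * hab₁ + v * hab₂ + huv
    rw [hab, sub_smul, one_smul]
    nth_rewrite 1 [← hxuv]
    module
  have hb₁ : b₁ = 0 := by
    by_contra hb₁0
    have hpos : 0 < u * b₁ + v * b₂ := by positivity
    have hx' : x = (u * b₁ / (u * b₁ + v * b₂)) • z₁ + (v * b₂ / (u * b₁ + v * b₂)) • z₂ := by
      rw [div_eq_inv_mul, div_eq_inv_mul, mul_smul _ (u * b₁), mul_smul _ (v * b₂), ← smul_add,
        ← hcombo, smul_smul, inv_mul_cancel₀ hpos.ne', one_smul]
    exact hx (hx' ▸ convex_iff_div.1 (convex_convexHull 𝕜 t) hz₁ hz₂ (by positivity)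
      (by positivity) hpos)
  rw [hb₁, zero_smul, add_zero, show a₁ = 1 by linarith, one_smul]

lemma convexHull_subset_convexHull_extremePoints (S : Finset E) :
    convexHull 𝕜 (S : Set E) ⊆ convexHull 𝕜 ((convexHull 𝕜 (S : Set E)).extremePoints 𝕜) := by
  classical
  induction S using Finset.strongInduction with
  | H S ih =>
    by_cases h : ∃ s ∈ S, s ∈ convexHull 𝕜 ((S.erase s : Finset E) : Set E)
    · obtain ⟨s, hs, hs'⟩ := h
      have heq : convexHull 𝕜 (S : Set E) = convexHull 𝕜 ((S.erase s : Finset E) : Set E) := by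
        refine subset_antisymm (convexHull_min (fun y hy ↦ ?_) (convex_convexHull 𝕜 _))
          (convexHull_mono (by simp))
        rcases eq_or_ne y s with rfl | hys
        · exact hs'
        · exact subset_convexHull 𝕜 _ (Finset.mem_erase.2 ⟨hys, hy⟩)
      rw [heq]
      exact ih _ (Finset.erase_ssubset hs)
    · refine convexHull_mono fun s hs ↦ ?_
      have := mem_extremePoints_convexHull_insert fun hs' ↦ h ⟨s, hs, hs'⟩
      rwa [← Finset.coe_insert, Finset.insert_erase hs] at this

end ConvexGeometry

section RaiseFactor

variable {𝕜 E : Type*} [Field 𝕜] [LinearOrder 𝕜] [IsStrictOrderedRing 𝕜]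
  [AddCommGroup E] [Module 𝕜 E] {φ : E →ₗ[𝕜] 𝕜}

lemma add_smul_mem_convexHull_raise_factor {X Y Z F : Set E}
    (hX : Convex 𝕜 X) (hY : Convex 𝕜 Y) (hZ : Convex 𝕜 Z) (hF : Convex 𝕜 F)
    (hXφ : ∀ x ∈ X, φ x = -1) (hYφ : ∀ y ∈ Y, φ y = 0) (hZφ : ∀ z ∈ Z, φ z = 1)
    (hFφ : ∀ f ∈ F, φ f = 0) {f₀ p : E} (hf₀ : f₀ ∈ F)
    (hp : p ∈ convexHull 𝕜 (X + F ∪ Y ∪ Z)) (hp0 : 0 ≤ φ p) :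
    p + φ p • f₀ ∈ convexHull 𝕜 (X ∪ Y ∪ (Z + F)) := by
  obtain ⟨a, b, c, u, v, z, ha, hb, hc, habc, hu, hv, hz, rfl⟩ :=
    exists_smul_add_smul_add_smul_of_mem_convexHull_union (hX.add hF) hY hZ hp
  have hXFφ : ∀ s ∈ X + F, φ s = -1 := by
    rintro _ ⟨x, hx, f, hf, rfl⟩
    rw [map_add, hXφ x hx, hFφ f hf, add_zero]
  have weighted {S : Set E} {r d : 𝕜} {y : E} (hS : ∀ s ∈ S, φ s = r) (hy : d ≠ 0 → y ∈ S) :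
      d * φ y = d * r := by
    rcases eq_or_ne d 0 with rfl | hd
    · simp
    · rw [hS y (hy hd)]
  have hφp : φ (a • u + b • v + c • z) = c - a := by
    simp only [map_add, map_smul, smul_eq_mul, weighted hXFφ hu, weighted hYφ hv, weighted hZφ hz]
    ring
  rw [hφp] at hp0 ⊢
  obtain ⟨ξ, ψ, hξψ⟩ : ∃ ξ ψ : E, a ≠ 0 → ξ ∈ X ∧ ψ ∈ F ∧ u = ξ + ψ := by
    rcases eq_or_ne a 0 with rfl | ha0
    · exact ⟨0, 0, (absurd rfl ·)⟩
    · obtain ⟨ξ, hξ, ψ, hψ, hu⟩ := hu ha0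
      exact ⟨ξ, ψ, fun _ ↦ ⟨hξ, hψ, hu.symm⟩⟩
  have hau : a • u = a • ξ + a • ψ := by
    rcases eq_or_ne a 0 with rfl | ha0
    · simp
    · rw [(hξψ ha0).2.2, smul_add]
  -- Pair the mass `a` of the bottom layer with an equal mass of the top layer, and
  -- translate the rest of the top layer by `f₀`.
  have hsum : a • u + b • v + c • z + (c - a) • f₀ =
      ∑ᶠ i, ![a, b, a, c - a] i • ![ξ, v, z + ψ, z + f₀] i := by
    rw [finsum_eq_sum_of_fintype, Fin.sum_univ_four]
    simp only [Matrix.cons_val_zero, Matrix.cons_val_one, Matrix.cons_val, hau]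
    module
  rw [hsum]
  refine (convex_convexHull 𝕜 _).finsum_mem (fun i ↦ ?_) ?_ (fun i hi ↦ ?_)
  · fin_cases i <;> simp [ha, hb, hp0]
  · rw [finsum_eq_sum_of_fintype, Fin.sum_univ_four]
    simp only [Matrix.cons_val_zero, Matrix.cons_val_one, Matrix.cons_val]
    linear_combination habc
  · apply subset_convexHull 𝕜
    fin_cases i <;> simp only [Fin.zero_eta, Fin.mk_one, Fin.reduceFinMk, Matrix.cons_val_zero,
      Matrix.cons_val_one, Matrix.cons_val] at hi ⊢
    · exact .inl (.inl (hξψ hi).1)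
    · exact .inl (.inr (hv hi))
    · have hc0 : c ≠ 0 := by have := (Ne.symm hi).lt_of_le ha; linarith
      exact .inr (Set.add_mem_add (hz hc0) (hξψ hi).2.1)
    · have hc0 : c ≠ 0 := by rintro rfl; apply hi; linarith
      exact .inr (Set.add_mem_add (hz hc0) hf₀)

end RaiseFactor

section Topology

variable {𝕜 E : Type*} [Field 𝕜] [LinearOrder 𝕜] [IsStrictOrderedRing 𝕜] [TopologicalSpace 𝕜]
  [OrderTopology 𝕜] [AddCommGroup E] [Module 𝕜 E] [TopologicalSpace E]
  [IsTopologicalAddGroup E] [ContinuousSMul 𝕜 E]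

lemma exists_pos_add_smul_mem_sub_smul_mem {S : Set E} {x : E} (hx : x ∈ interior S) (v : E) :
    ∃ c : 𝕜, 0 < c ∧ x + c • v ∈ S ∧ x - c • v ∈ S := by
  rw [mem_interior_iff_mem_nhds] at hx
  have hadd : ∀ᶠ c in 𝓝 (0 : 𝕜), x + c • v ∈ S :=
    (by fun_prop : Continuous fun c : 𝕜 ↦ x + c • v).continuousAt.preimage_mem_nhds
      (by simpa using hx)
  have hsub : ∀ᶠ c in 𝓝 (0 : 𝕜), x - c • v ∈ S :=
    (by fun_prop : Continuous fun c : 𝕜 ↦ x - c • v).continuousAt.preimage_mem_nhds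
      (by simpa using hx)
  obtain ⟨c, ⟨hadd, hsub⟩, hc⟩ := ((hadd.and hsub).filter_mono nhdsWithin_le_nhds |>.and
    (self_mem_nhdsWithin (s := Ioi 0))).exists
  exact ⟨c, hc, hadd, hsub⟩

lemma notMem_extremePoints_of_mem_interior [Nontrivial E] {S : Set E} {x : E}
    (hx : x ∈ interior S) : x ∉ S.extremePoints 𝕜 := by
  intro hext
  obtain ⟨v, hv⟩ := exists_ne (0 : E)
  obtain ⟨c, hc, hadd, hsub⟩ := exists_pos_add_smul_mem_sub_smul_mem (𝕜 := 𝕜) hx v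
  have hcv : x - c • v = x := hext.2 hsub hadd (mem_openSegment_sub_add x (c • v))
  simp [hc.ne', hv] at hcv

lemma abs_apply_lt_of_mem_interior {φ : E →ₗ[𝕜] 𝕜} {v : E} (hv : 0 < φ v) {S : Set E} {r : 𝕜}
    (hS : ∀ y ∈ S, |φ y| ≤ r) {x : E} (hx : x ∈ interior S) : |φ x| < r := by
  obtain ⟨c, hc, hadd, hsub⟩ := exists_pos_add_smul_mem_sub_smul_mem (𝕜 := 𝕜) hx v
  have h₁ := (abs_le.1 (hS _ hadd)).2
  have h₂ := (abs_le.1 (hS _ hsub)).1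
  simp only [map_add, map_sub, map_smul, smul_eq_mul] at h₁ h₂
  have := mul_pos hc hv
  exact abs_lt.2 ⟨by linarith, by linarith⟩

lemma mem_interior_convexHull_raise_factor {φ : E →ₗ[𝕜] 𝕜} (hφ : Continuous φ) {X Y Z F : Set E}
    (hX : Convex 𝕜 X) (hY : Convex 𝕜 Y) (hZ : Convex 𝕜 Z) (hF : Convex 𝕜 F)
    (hXφ : ∀ x ∈ X, φ x = -1) (hYφ : ∀ y ∈ Y, φ y = 0) (hZφ : ∀ z ∈ Z, φ z = 1)
    (hFφ : ∀ f ∈ F, φ f = 0) (hXne : X.Nonempty) (hFne : F.Nonempty) {p : E} (hp0 : φ p = 0)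
    (hp : p ∈ interior (convexHull 𝕜 (X + F ∪ Y ∪ Z))) :
    p ∈ interior (convexHull 𝕜 (X ∪ Y ∪ (Z + F))) := by
  obtain ⟨x₀, hx₀⟩ := hXne
  obtain ⟨f₀, hf₀⟩ := hFne
  have raise {q : E} (hq : q ∈ convexHull 𝕜 (X + F ∪ Y ∪ Z)) (hq0 : 0 ≤ φ q) :
      q + φ q • f₀ ∈ convexHull 𝕜 (X ∪ Y ∪ (Z + F)) :=
    add_smul_mem_convexHull_raise_factor hX hY hZ hF hXφ hYφ hZφ hFφ hf₀ hq hq0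
  rw [mem_interior_iff_mem_nhds] at hp ⊢
  have h₁ : ∀ᶠ y in 𝓝 p, y - φ y • f₀ ∈ convexHull 𝕜 (X + F ∪ Y ∪ Z) :=
    (by fun_prop : Continuous fun y ↦ y - φ y • f₀).continuousAt.preimage_mem_nhds
      (by simpa [hp0] using hp)
  have h₂ : ∀ᶠ y in 𝓝 p, (1 + φ y)⁻¹ • (y + φ y • x₀) ∈ convexHull 𝕜 (X + F ∪ Y ∪ Z) := by
    refine ContinuousAt.preimage_mem_nhds ?_ (by simpa [hp0] using hp)
    exact ((continuousAt_const.add hφ.continuousAt).inv₀ (by simp [hp0])).smul (by fun_prop)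
  have h₃ : ∀ᶠ y in 𝓝 p, 0 < 1 + φ y :=
    continuousAt_const.eventually_lt (continuousAt_const.add hφ.continuousAt) (by simp [hp0])
  filter_upwards [h₁, h₂, h₃] with y hy₁ hy₂ hy₃
  rcases le_or_gt 0 (φ y) with hy | hy
  · have hφy : φ (y - φ y • f₀) = φ y := by simp [hFφ f₀ hf₀]
    simpa [hφy] using raise hy₁ (by rwa [hφy])
  · -- `y` lies on the segment from `x₀ ∈ X` to a point `q` at height `0`.
    set q := (1 + φ y)⁻¹ • (y + φ y • x₀)
    have hq0 : φ q = 0 := by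
      simp only [q, map_smul, map_add, hXφ x₀ hx₀, smul_eq_mul]
      ring
    have hq : q ∈ convexHull 𝕜 (X ∪ Y ∪ (Z + F)) := by simpa [hq0] using raise hy₂ hq0.ge
    have hy_eq : y = (1 + φ y) • q + (-φ y) • x₀ := by
      simp only [q, smul_smul, mul_inv_cancel₀ hy₃.ne', one_smul]
      module
    rw [hy_eq]
    exact convex_convexHull 𝕜 _ hq (subset_convexHull 𝕜 _ (.inl (.inl hx₀))) hy₃.le
      (by linarith) (by ring)

lemma mem_interior_convexHull_raise_factor_iff {φ : E →ₗ[𝕜] 𝕜} (hφ : Continuous φ)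
    {X Y Z F : Set E} (hX : Convex 𝕜 X) (hY : Convex 𝕜 Y) (hZ : Convex 𝕜 Z) (hF : Convex 𝕜 F)
    (hXφ : ∀ x ∈ X, φ x = -1) (hYφ : ∀ y ∈ Y, φ y = 0) (hZφ : ∀ z ∈ Z, φ z = 1)
    (hFφ : ∀ f ∈ F, φ f = 0) (hXne : X.Nonempty) (hZne : Z.Nonempty) (hFne : F.Nonempty)
    {p : E} (hp0 : φ p = 0) :
    p ∈ interior (convexHull 𝕜 (X + F ∪ Y ∪ Z)) ↔
      p ∈ interior (convexHull 𝕜 (X ∪ Y ∪ (Z + F))) := by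
  refine ⟨mem_interior_convexHull_raise_factor hφ hX hY hZ hF hXφ hYφ hZφ hFφ hXne hFne hp0,
    fun hp ↦ ?_⟩
  have hswap : ∀ A B C : Set E, A ∪ B ∪ C = C ∪ B ∪ A := fun _ _ _ ↦ by ac_rfl
  rw [hswap] at hp ⊢
  exact mem_interior_convexHull_raise_factor (φ := -φ) (by fun_prop) hZ hY hX hF
    (fun z hz ↦ by simp [hZφ z hz]) (fun y hy ↦ by simp [hYφ y hy])
    (fun x hx ↦ by simp [hXφ x hx]) (fun f hf ↦ by simp [hFφ f hf]) hZne hFne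
    (by simpa using hp0) hp

end Topology

section Lattice

variable {n : ℕ}

def pairingₗ (w : Fin n → ℤ) : (Fin n → ℚ) →ₗ[ℚ] ℚ where
  toFun := pairing w
  map_add' x y := by simp only [pairing, Pi.add_apply, mul_add, Finset.sum_add_distrib]
  map_smul' c x := by
    simp only [pairing, Pi.smul_apply, smul_eq_mul, RingHom.id_apply, Finset.mul_sum,
      mul_left_comm]

@[simp]
lemma pairingₗ_apply (w : Fin n → ℤ) (x : Fin n → ℚ) : pairingₗ w x = pairing w x := rfl

lemma pairing_add (w : Fin n → ℤ) (x y : Fin n → ℚ) :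
    pairing w (x + y) = pairing w x + pairing w y :=
  map_add (pairingₗ w) x y

lemma continuous_pairingₗ (w : Fin n → ℤ) : Continuous (pairingₗ w) :=
  LinearMap.continuous_on_pi _

lemma pairing_self_pos {w : Fin n → ℤ} (hw : w ≠ 0) : 0 < pairing w fun i ↦ (w i : ℚ) := by
  obtain ⟨i, hi⟩ := Function.ne_iff.1 hw
  exact Finset.sum_pos' (fun j _ ↦ mul_self_nonneg _)
    ⟨i, Finset.mem_univ i, mul_self_pos.2 (by exact_mod_cast hi)⟩

lemma IsLatticePt.add {x y : Fin n → ℚ} (hx : IsLatticePt x) (hy : IsLatticePt y) :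
    IsLatticePt (x + y) := fun i ↦ by
  obtain ⟨a, ha⟩ := hx i
  obtain ⟨b, hb⟩ := hy i
  exact ⟨a + b, by simp [ha, hb]⟩

lemma IsLatticePt.exists_pairing_eq {x : Fin n → ℚ} (hx : IsLatticePt x) (w : Fin n → ℤ) :
    ∃ m : ℤ, pairing w x = m := by
  choose z hz using hx
  exact ⟨∑ i, w i * z i, by simp [pairing, hz]⟩

lemma IsLatticePt.pairing_eq_zero_of_abs_lt {x : Fin n → ℚ} (hx : IsLatticePt x)
    {w : Fin n → ℤ} (h : |pairing w x| < 1) : pairing w x = 0 := by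
  obtain ⟨m, hm⟩ := hx.exists_pairing_eq w
  rw [hm] at h ⊢
  have := abs_lt.1 (show |m| < 1 by exact_mod_cast h)
  rw [show m = 0 by omega, Int.cast_zero]

lemma IsLatticePt.pairing_eq_of_abs_le_one {x : Fin n → ℚ} (hx : IsLatticePt x)
    {w : Fin n → ℤ} (h : |pairing w x| ≤ 1) :
    pairing w x = -1 ∨ pairing w x = 0 ∨ pairing w x = 1 := by
  obtain ⟨m, hm⟩ := hx.exists_pairing_eq w
  rw [hm] at h ⊢
  have := abs_le.1 (show |m| ≤ 1 by exact_mod_cast h)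
  rcases (show m = -1 ∨ m = 0 ∨ m = 1 by omega) with rfl | rfl | rfl <;> simp

lemma isLatticePolytope_empty : IsLatticePolytope (∅ : Set (Fin n → ℚ)) :=
  ⟨∅, by simp, by simp⟩

namespace IsLatticePolytope

variable {P Q : Set (Fin n → ℚ)}

lemma convex (hP : IsLatticePolytope P) : Convex ℚ P := by
  obtain ⟨S, -, rfl⟩ := hP
  exact convex_convexHull ℚ _

lemma add (hP : IsLatticePolytope P) (hQ : IsLatticePolytope Q) : IsLatticePolytope (P + Q) := by
  classical
  obtain ⟨S, hS, rfl⟩ := hP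
  obtain ⟨T, hT, rfl⟩ := hQ
  refine ⟨S + T, fun x hx ↦ ?_, by rw [Finset.coe_add, convexHull_add]⟩
  obtain ⟨s, hs, t, ht, rfl⟩ := Finset.mem_add.1 hx
  exact (hS s hs).add (hT t ht)

lemma convexHull_union (hP : IsLatticePolytope P) (hQ : IsLatticePolytope Q) :
    IsLatticePolytope (convexHull ℚ (P ∪ Q)) := by
  classical
  obtain ⟨S, hS, rfl⟩ := hP
  obtain ⟨T, hT, rfl⟩ := hQ
  refine ⟨S ∪ T, fun x hx ↦ (Finset.mem_union.1 hx).elim (hS x) (hT x), ?_⟩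
  rw [convexHull_convexHull_union_left, convexHull_convexHull_union_right, Finset.coe_union]

lemma isLatticePt_of_mem_extremePoints (hP : IsLatticePolytope P) {v : Fin n → ℚ}
    (hv : v ∈ P.extremePoints ℚ) : IsLatticePt v := by
  obtain ⟨S, hS, rfl⟩ := hP
  exact hS v (extremePoints_convexHull_subset hv)

lemma eq_convexHull_extremePoints (hP : IsLatticePolytope P) :
    P = convexHull ℚ (P.extremePoints ℚ) := by
  refine subset_antisymm ?_ (convexHull_min extremePoints_subset hP.convex)
  obtain ⟨S, -, rfl⟩ := hP
  exact convexHull_subset_convexHull_extremePoints S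

lemma exists_mem_extremePoints_apply_le (hP : IsLatticePolytope P)
    (φ : (Fin n → ℚ) →ₗ[ℚ] ℚ) {x : Fin n → ℚ} (hx : x ∈ P) :
    ∃ v ∈ P.extremePoints ℚ, φ v ≤ φ x := by
  rw [hP.eq_convexHull_extremePoints] at hx
  exact (φ.concaveOn convex_univ).exists_le_of_mem_convexHull (subset_univ _) hx

lemma exists_mem_extremePoints_apply_eq (hP : IsLatticePolytope P)
    (φ : (Fin n → ℚ) →ₗ[ℚ] ℚ) {r : ℚ} (hr : ∀ x ∈ P, r ≤ φ x) {x : Fin n → ℚ} (hx : x ∈ P)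
    (hxr : φ x = r) : ∃ v ∈ P.extremePoints ℚ, φ v = r := by
  obtain ⟨v, hv, hvx⟩ := hP.exists_mem_extremePoints_apply_le φ hx
  exact ⟨v, hv, le_antisymm (hxr ▸ hvx) (hr v (extremePoints_subset hv))⟩

lemma finite_latticePts (hP : IsLatticePolytope P) : {x | x ∈ P ∧ IsLatticePt x}.Finite := by
  obtain ⟨S, -, rfl⟩ := hP
  set R : Fin n → ℚ := fun i ↦ ∑ s ∈ S, |s i|
  have hbound (x : Fin n → ℚ) (hx : x ∈ convexHull ℚ (S : Set (Fin n → ℚ))) (i : Fin n) :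
      |x i| ≤ R i := by
    let π : (Fin n → ℚ) →ₗ[ℚ] ℚ := LinearMap.proj i
    obtain ⟨s, hs, hxs⟩ := (π.convexOn convex_univ).exists_ge_of_mem_convexHull (subset_univ _) hx
    obtain ⟨s', hs', hs'x⟩ :=
      (π.concaveOn convex_univ).exists_le_of_mem_convexHull (subset_univ _) hx
    have h₁ := Finset.single_le_sum (f := fun s : Fin n → ℚ ↦ |s i|) (fun _ _ ↦ abs_nonneg _) hs
    have h₂ := Finset.single_le_sum (f := fun s : Fin n → ℚ ↦ |s i|) (fun _ _ ↦ abs_nonneg _) hs'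
    simp only [π, LinearMap.proj_apply] at hxs hs'x
    exact abs_le.2 ⟨by linarith [neg_abs_le (s' i)], by linarith [le_abs_self (s i)]⟩
  set B : Fin n → ℤ := fun i ↦ ⌈R i⌉
  refine ((Set.finite_Icc (-B) B).image fun z i ↦ (z i : ℚ)).subset ?_
  rintro x ⟨hx, hxl⟩
  choose z hz using hxl
  refine ⟨z, ⟨fun i ↦ ?_, fun i ↦ ?_⟩, funext fun i ↦ (hz i).symm⟩
  all_goals
    obtain ⟨hlo, hhi⟩ := abs_le.1 (hz i ▸ hbound x hx i)
    have := Int.le_ceil (R i)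
    simp only [Pi.neg_apply, B]
    rw [← Int.cast_le (R := ℚ)]
    push_cast
    linarith

end IsLatticePolytope

end Lattice

section Slices

variable {n : ℕ} {w : Fin n → ℤ} {h : ℤ} {P : Set (Fin n → ℚ)}

lemma pairing_eq_of_mem_wSlice {x : Fin n → ℚ} (hx : x ∈ wSlice w h P) : pairing w x = h :=
  convexHull_min (fun _ hy ↦ hy.2.2) (convex_hyperplane (pairingₗ w).isLinear (h : ℚ)) hx

lemma wSlice_subset (hP : Convex ℚ P) : wSlice w h P ⊆ P :=
  convexHull_min (fun _ hy ↦ hy.1) hP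

lemma mem_wSlice {x : Fin n → ℚ} (hx : x ∈ P) (hxl : IsLatticePt x) (hxh : pairing w x = h) :
    x ∈ wSlice w h P :=
  subset_convexHull ℚ _ ⟨hx, hxl, hxh⟩

lemma wSlice_eq_empty (hP : ∀ x ∈ P, pairing w x ≠ h) : wSlice w h P = ∅ :=
  convexHull_eq_empty.2 (eq_empty_of_forall_notMem fun x hx ↦ hP x hx.1 hx.2.2)

lemma IsLatticePolytope.wSlice (hP : IsLatticePolytope P) (w : Fin n → ℤ) (h : ℤ) :
    IsLatticePolytope (wSlice w h P) := by
  have hfin : {x | x ∈ P ∧ IsLatticePt x ∧ pairing w x = h}.Finite :=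
    hP.finite_latticePts.subset fun x hx ↦ ⟨hx.1, hx.2.1⟩
  exact ⟨hfin.toFinset, fun x hx ↦ (hfin.mem_toFinset.1 hx).2.1, by
    rw [Set.Finite.coe_toFinset, _root_.wSlice]⟩

end Slices

section Canonical

variable {n : ℕ}

lemma isPrimitivePt_of_mem_extremePoints [NeZero n] {P : Set (Fin n → ℚ)} (hP : Convex ℚ P)
    (h0 : 0 ∈ interior P) (hcan : ∀ x ∈ interior P, IsLatticePt x → x = 0)
    {v : Fin n → ℚ} (hv : v ∈ P.extremePoints ℚ) (hvl : IsLatticePt v) : IsPrimitivePt v := by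
  choose z hz using hvl
  have hv0 : v ≠ 0 := by
    rintro rfl
    exact notMem_extremePoints_of_mem_interior h0 hv
  refine ⟨z, hz, ?_⟩
  set g := Finset.univ.gcd z
  have hg_nonneg : 0 ≤ g := Int.nonneg_of_normalize_eq_self Finset.normalize_gcd
  have hg0 : g ≠ 0 := fun hg ↦ hv0 <| funext fun i ↦ by
    rw [hz i, Finset.gcd_eq_zero_iff.1 hg i (Finset.mem_univ i), Int.cast_zero, Pi.zero_apply]
  by_contra hg1
  -- Otherwise `v = g • u` with `g ≥ 2`, so the lattice point `u` lies between `0 ∈ interior P`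
  -- and `v`, hence in `interior P`.
  have hg2 : (2 : ℚ) ≤ g := by exact_mod_cast (show 2 ≤ g by omega)
  set u : Fin n → ℚ := fun i ↦ ((z i / g : ℤ) : ℚ)
  have hvu : v = (g : ℚ) • u := funext fun i ↦ by
    rw [hz i, Pi.smul_apply, smul_eq_mul, ← Int.cast_mul,
      Int.mul_ediv_cancel' (Finset.gcd_dvd (Finset.mem_univ i))]
  have hu : u ∈ interior P := by
    have := hP.combo_self_interior_mem_interior hv.1 h0 (a := (g : ℚ)⁻¹) (b := 1 - (g : ℚ)⁻¹)
      (by positivity) (by rw [sub_pos]; exact inv_lt_one_of_one_lt₀ (by linarith)) (by ring)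
    rwa [smul_zero, add_zero, hvu, smul_smul, inv_mul_cancel₀ (by positivity), one_smul] at this
  exact hv0 (by rw [hvu, hcan u hu fun i ↦ ⟨_, rfl⟩, smul_zero])

lemma IsCanonical.of_mem_interior_iff {w : Fin n → ℤ} (hw : w ≠ 0) {P Q : Set (Fin n → ℚ)}
    (hP : IsLatticePolytope P) (hPw : ∀ x ∈ P, |pairing w x| ≤ 1)
    (hPQ : ∀ x, pairing w x = 0 → (x ∈ interior P ↔ x ∈ interior Q)) (hQ : IsCanonical Q) :
    IsCanonical P := by
  have : NeZero n := ⟨by rintro rfl; exact hw (Subsingleton.elim _ _)⟩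
  have h0 : (0 : Fin n → ℚ) ∈ interior P := (hPQ 0 (map_zero (pairingₗ w))).2 hQ.1.2.1
  have hcan (x) (hx : x ∈ interior P) (hxl : IsLatticePt x) : x = 0 := by
    have hx0 := hxl.pairing_eq_zero_of_abs_lt
      (abs_apply_lt_of_mem_interior (φ := pairingₗ w) (pairing_self_pos hw) hPw hx)
    exact hQ.2 x ((hPQ x hx0).1 hx) hxl
  exact ⟨⟨hP, h0, fun v hv ↦ isPrimitivePt_of_mem_extremePoints hP.convex h0 hcan hv
    (hP.isLatticePt_of_mem_extremePoints hv)⟩, hcan⟩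

end Canonical

section WidthTwo

variable {n : ℕ} {w : Fin n → ℤ} {P F : Set (Fin n → ℚ)} {G : ℤ → Set (Fin n → ℚ)}

lemma IsMutData.isLatticePolytope_neg_one (hdata : IsMutData w P F G) :
    IsLatticePolytope (G (-1)) :=
  (hdata.2.2.2 (-1) (by norm_num)).1.elim (fun h ↦ h ▸ isLatticePolytope_empty) id

lemma IsMutData.extremePoints_subset_neg_one (hdata : IsMutData w P F G) :
    {v | v ∈ P.extremePoints ℚ ∧ pairing w v = -1} ⊆ G (-1) + F := by
  simpa using (hdata.2.2.2 (-1) (by norm_num)).2.1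

lemma IsMutData.add_subset_wSlice_neg_one (hdata : IsMutData w P F G) :
    G (-1) + F ⊆ wSlice w (-1) P := by
  simpa using (hdata.2.2.2 (-1) (by norm_num)).2.2

lemma IsMutData.pairing_eq_neg_one (hdata : IsMutData w P F G) {g : Fin n → ℚ}
    (hg : g ∈ G (-1)) : pairing w g = -1 := by
  obtain ⟨f, hf⟩ := hdata.2.1
  have := pairing_eq_of_mem_wSlice (hdata.add_subset_wSlice_neg_one (Set.add_mem_add hg hf))
  simpa [pairing_add, hdata.2.2.1 f hf] using this

lemma mutation_eq_of_width_two (hdata : IsMutData w P F G) (hPw : ∀ x ∈ P, |pairing w x| ≤ 1) :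
    mutation w P F G = convexHull ℚ (G (-1) ∪ wSlice w 0 P ∪ (wSlice w 1 P + F)) := by
  obtain ⟨-, hF, -, hG⟩ := hdata
  have hslice (h : ℤ) (hh : h < -1 ∨ 1 < h) : wSlice w h P = ∅ := wSlice_eq_empty fun x hx hxh ↦ by
    have := abs_le.1 (hxh ▸ hPw x hx)
    have : -1 ≤ h ∧ h ≤ 1 := ⟨by exact_mod_cast this.1, by exact_mod_cast this.2⟩
    omega
  have hneg : ⋃ h : ℤ, ⋃ _ : h < 0, G h = G (-1) := by
    refine subset_antisymm (iUnion₂_subset fun h hh ↦ ?_)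
      (subset_iUnion₂_of_subset (-1) (by norm_num) subset_rfl)
    obtain rfl | hh := (show h = -1 ∨ h < -1 by omega)
    · rfl
    · intro g hg
      obtain ⟨f, hf⟩ := hF
      have := (hG h (by omega)).2.2 (Set.add_mem_add hg (Set.smul_mem_smul_set hf))
      rw [hslice h (.inl hh)] at this
      exact this.elim
  have hpos : ⋃ h : ℤ, ⋃ _ : 0 ≤ h, wSlice w h P + (h : ℚ) • F =
      wSlice w 0 P ∪ (wSlice w 1 P + F) := by
    refine subset_antisymm (iUnion₂_subset fun h hh ↦ ?_) (union_subset ?_ ?_)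
    · obtain rfl | rfl | hh := (show h = 0 ∨ h = 1 ∨ 1 < h by omega)
      · simp [zero_smul_set hF]
      · simp
      · simp [hslice h (.inr hh)]
    · exact subset_iUnion₂_of_subset 0 le_rfl (by simp [zero_smul_set hF])
    · exact subset_iUnion₂_of_subset 1 zero_le_one (by simp)
  rw [mutation, hneg, hpos, union_assoc]

lemma eq_convexHull_of_width_two (hP : IsLatticePolytope P) (hdata : IsMutData w P F G)
    (hPw : ∀ x ∈ P, |pairing w x| ≤ 1) :
    P = convexHull ℚ (G (-1) + F ∪ wSlice w 0 P ∪ wSlice w 1 P) := by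
  refine subset_antisymm ?_ (convexHull_min ?_ hP.convex)
  · nth_rewrite 1 [hP.eq_convexHull_extremePoints]
    refine convexHull_mono fun v hv ↦ ?_
    have hvl := hP.isLatticePt_of_mem_extremePoints hv
    have hvP := extremePoints_subset hv
    rcases hvl.pairing_eq_of_abs_le_one (hPw v hvP) with h | h | h
    · exact .inl (.inl (hdata.extremePoints_subset_neg_one ⟨hv, h⟩))
    · exact .inl (.inr (mem_wSlice hvP hvl (by simpa using h)))
    · exact .inr (mem_wSlice hvP hvl (by simpa using h))
  · have hsub (h : ℤ) : wSlice w h P ⊆ P := wSlice_subset hP.convex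
    exact union_subset (union_subset (hdata.add_subset_wSlice_neg_one.trans (hsub (-1))) (hsub 0))
      (hsub 1)

lemma mem_interior_mutation_iff_of_width_two (hP : IsLatticePolytope P)
    (hdata : IsMutData w P F G) (hPw : ∀ x ∈ P, |pairing w x| ≤ 1)
    (hPmin : ∃ x ∈ P, pairing w x = -1) (hPmax : ∃ x ∈ P, pairing w x = 1) {x : Fin n → ℚ}
    (hx : pairing w x = 0) : x ∈ interior (mutation w P F G) ↔ x ∈ interior P := by
  have hGne : (G (-1)).Nonempty := by
    obtain ⟨y, hy, hy1⟩ := hPmin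
    obtain ⟨v, hv, hv1⟩ := hP.exists_mem_extremePoints_apply_eq (pairingₗ w)
      (fun z hz ↦ (abs_le.1 (hPw z hz)).1) hy hy1
    exact Set.Nonempty.of_add_left ⟨v, hdata.extremePoints_subset_neg_one ⟨hv, hv1⟩⟩
  have hS1ne : (wSlice w 1 P).Nonempty := by
    obtain ⟨y, hy, hy1⟩ := hPmax
    obtain ⟨v, hv, hv1⟩ := hP.exists_mem_extremePoints_apply_eq (-pairingₗ w) (r := -1)
      (fun z hz ↦ by simpa using (abs_le.1 (hPw z hz)).2) hy (by simp [hy1])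
    exact ⟨v, mem_wSlice (extremePoints_subset hv) (hP.isLatticePt_of_mem_extremePoints hv)
      (by simpa using hv1)⟩
  have : x ∈ interior (convexHull ℚ (G (-1) + F ∪ wSlice w 0 P ∪ wSlice w 1 P)) ↔
      x ∈ interior (convexHull ℚ (G (-1) ∪ wSlice w 0 P ∪ (wSlice w 1 P + F))) :=
    mem_interior_convexHull_raise_factor_iff (continuous_pairingₗ w)
      hdata.isLatticePolytope_neg_one.convex (convex_convexHull ℚ _) (convex_convexHull ℚ _)
      hdata.1.convex (fun _ hg ↦ hdata.pairing_eq_neg_one hg)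
      (fun _ hy ↦ by simpa using pairing_eq_of_mem_wSlice hy)
      (fun _ hz ↦ by simpa using pairing_eq_of_mem_wSlice hz) hdata.2.2.1 hGne hS1ne hdata.2.1 hx
  rw [← eq_convexHull_of_width_two hP hdata hPw, ← mutation_eq_of_width_two hdata hPw] at this
  exact this.symm

lemma isLatticePolytope_mutation_of_width_two (hP : IsLatticePolytope P)
    (hdata : IsMutData w P F G) (hPw : ∀ x ∈ P, |pairing w x| ≤ 1) :
    IsLatticePolytope (mutation w P F G) := by
  rw [mutation_eq_of_width_two hdata hPw, ← convexHull_convexHull_union_left]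
  exact (hdata.isLatticePolytope_neg_one.convexHull_union (hP.wSlice w 0)).convexHull_union
    ((hP.wSlice w 1).add hdata.1)

lemma abs_pairing_le_one_of_mem_mutation (hdata : IsMutData w P F G)
    (hPw : ∀ x ∈ P, |pairing w x| ≤ 1) {x : Fin n → ℚ} (hx : x ∈ mutation w P F G) :
    |pairing w x| ≤ 1 := by
  rw [mutation_eq_of_width_two hdata hPw] at hx
  refine abs_le.2 (convexHull_min ?_ ((convex_Icc (-1 : ℚ) 1).linear_preimage (pairingₗ w)) hx)
  rintro y ((hy | hy) | ⟨s, hs, f, hf, rfl⟩)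
  · simp [hdata.pairing_eq_neg_one hy]
  · simp [pairing_eq_of_mem_wSlice hy]
  · simp [pairing_add, pairing_eq_of_mem_wSlice hs, hdata.2.2.1 f hf]

end WidthTwo

theorem mutation_canonical_iff_width_two_general {n : ℕ} (w : Fin n → ℤ) (P F : Set (Fin n → ℚ))
    (G : ℤ → Set (Fin n → ℚ)) (hP : IsLatticePolytope P)
    (hdata : IsMutData w P F G)
    (hmin : (∀ x ∈ P, (-1 : ℚ) ≤ pairing w x) ∧ ∃ x ∈ P, pairing w x = -1)
    (hmax : (∀ x ∈ P, pairing w x ≤ 1) ∧ ∃ x ∈ P, pairing w x = 1) :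
    IsCanonical (mutation w P F G) ↔ IsCanonical P := by
  have hw : w ≠ 0 := by
    rintro rfl
    obtain ⟨x, -, hx⟩ := hmin.2
    simp [pairing] at hx
  have hPw (x) (hx : x ∈ P) : |pairing w x| ≤ 1 := abs_le.2 ⟨hmin.1 x hx, hmax.1 x hx⟩
  have hint (x) (hx : pairing w x = 0) :=
    mem_interior_mutation_iff_of_width_two hP hdata hPw hmin.2 hmax.2 hx
  exact ⟨IsCanonical.of_mem_interior_iff hw hP hPw fun x hx ↦ (hint x hx).symm,
    IsCanonical.of_mem_interior_iff hw (isLatticePolytope_mutation_of_width_two hP hdata hPw)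
      (fun _ ↦ abs_pairing_le_one_of_mem_mutation hdata hPw) hint⟩

/-- For a width-two vector `w` (heights of `P` range from `-1` to `1`), a combinatorial
mutation `Q = mut_w(P,F)` is a canonical polytope if and only if `P` is. -/
theorem mutation_canonical_iff_width_two {n : ℕ} (w : Fin n → ℤ) (P F : Set (Fin n → ℚ))
    (G : ℤ → Set (Fin n → ℚ)) (hP : IsLatticePolytope P) (hw : IsPrimitive w)
    (hdata : IsMutData w P F G)
    (hmin : (∀ x ∈ P, (-1 : ℚ) ≤ pairing w x) ∧ ∃ x ∈ P, pairing w x = -1)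
    (hmax : (∀ x ∈ P, pairing w x ≤ 1) ∧ ∃ x ∈ P, pairing w x = 1) :
    IsCanonical (mutation w P F G) ↔ IsCanonical P :=
  mutation_canonical_iff_width_two_general w P F G hP hdata hmin hmax
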